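/- Let F be a field of characteristic zero and f ∈ F(t, x) a bivariate rational function. Write f = D_x(g) + a/b via Hermite reduction, where g ∈ F(t, x), a, b ∈ F(t)[x], gcd(a, b) = 1, deg_x(a) < deg_x(b), and b squarefree in x over F(t). Then for any nonzero L = Σ_{i=0}^ρ ℓ_i S_t^i ∈ F(t)⟨S_t⟩ (where S_t is the shift t ↦ t+1), the following are equivalent: (i) L(a/b) = D_x(h) for some h ∈ F(t, x); (ii) L(a/b) = 0. -/

import Mathlib

open Polynomial

/-- The derivative `d/dx` on `K(x)` (with constants `K`), by the quotient rule on the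
reduced representation. -/
noncomputable def ratDeriv {K : Type*} [Field K] (f : RatFunc K) : RatFunc K :=
  (algebraMap K[X] (RatFunc K) (derivative f.num) * algebraMap K[X] (RatFunc K) f.denom -
      algebraMap K[X] (RatFunc K) f.num * algebraMap K[X] (RatFunc K) (derivative f.denom)) /
    algebraMap K[X] (RatFunc K) (f.denom ^ 2)

/-- The shift `S_t : t ↦ t + 1` on `F(t)`, as a ring homomorphism. -/
noncomputable def shiftRF {F : Type*} [Field F] : RatFunc F →+* RatFunc F :=
  RatFunc.mapRingHom (Polynomial.eval₂RingHom (Polynomial.C : F →+* F[X]) (X + C 1)) (by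
    intro q hq
    simp only [Submonoid.mem_comap, coe_eval₂RingHom]
    refine mem_nonZeroDivisors_of_ne_zero fun h0 => nonZeroDivisors.ne_zero hq ?_
    have hcomp : q.comp (X + C 1) = 0 := h0
    have h2 := congrArg (fun r => r.comp (X - C 1)) hcomp
    simpa [Polynomial.comp_assoc, Polynomial.add_comp, Polynomial.X_comp,
      Polynomial.C_comp, sub_add_cancel] using h2)

/-!
Each shifted term `σⁱa / σⁱb` is a proper fraction with squarefree denominator: the shift preserves
degrees, and over a perfect field squarefree means separable, which survives any field map. Such
fractions form an `F(t)`-subspace (the radical of a product of squarefree denominators is a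
squarefree common denominator), so `L(a/b)` is again one. Conversely, if `h = p/q` in lowest terms
and `π^(m+1)` exactly divides `q` for an irreducible `π`, then `π^(m+2)` exactly divides the
denominator of `D_x h`, because `π ∤ π'` in characteristic zero. So a derivative with squarefree
denominator is the derivative of a polynomial, hence a polynomial, and it is proper only if it
vanishes.
-/

theorem Squarefree.map_of_perfectField {K L : Type*} [Field K] [PerfectField K] [Field L]
    (φ : K →+* L) {q : K[X]} (hq : Squarefree q) : Squarefree (q.map φ) :=
  (PerfectField.separable_iff_squarefree.mpr hq).map.squarefree

theorem Polynomial.exists_wronskian_pow_mul_eq_pow_mul_not_dvd {K : Type*} [Field K] [CharZero K]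
    {π u p : K[X]} (hπ : Irreducible π) (hu : ¬π ∣ u) (hp : ¬π ∣ p) (m : ℕ) :
    ∃ w, wronskian (π ^ (m + 1) * u) p = π ^ m * w ∧ ¬π ∣ w := by
  refine ⟨π * wronskian u p - C ((m : K) + 1) * (derivative π * u * p), ?_, fun hw => ?_⟩
  · simp only [wronskian, derivative_mul, derivative_pow, map_add, map_natCast, map_one]
    push_cast
    ring
  have hπ' : ¬π ∣ derivative π := fun h => hπ.not_isUnit (hπ.separable.isUnit_of_dvd' dvd_rfl h)
  have hc : ¬π ∣ C ((m : K) + 1) := fun h =>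
    hπ.not_isUnit (isUnit_of_dvd_unit h (isUnit_C.mpr (IsUnit.mk0 _ m.cast_add_one_ne_zero)))
  rw [dvd_sub_right (dvd_mul_right π _)] at hw
  exact hπ.prime.not_dvd_mul hc (hπ.prime.not_dvd_mul (hπ.prime.not_dvd_mul hπ' hu) hp) hw

namespace RatFunc

variable {K : Type*} [Field K]

def IsProperFraction (f : RatFunc K) (q : K[X]) : Prop :=
  ∃ p : K[X], p.degree < q.degree ∧
    f * algebraMap K[X] (RatFunc K) q = algebraMap K[X] (RatFunc K) p

def IsSquarefreeProperFraction (f : RatFunc K) : Prop :=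
  ∃ q : K[X], Squarefree q ∧ IsProperFraction f q

theorem IsProperFraction.add {f₁ f₂ : RatFunc K} {q : K[X]} (h₁ : IsProperFraction f₁ q)
    (h₂ : IsProperFraction f₂ q) : IsProperFraction (f₁ + f₂) q := by
  obtain ⟨p₁, hd₁, he₁⟩ := h₁
  obtain ⟨p₂, hd₂, he₂⟩ := h₂
  exact ⟨p₁ + p₂, (degree_add_le _ _).trans_lt (max_lt hd₁ hd₂),
    by rw [add_mul, he₁, he₂, map_add]⟩

theorem IsProperFraction.of_dvd {f : RatFunc K} {q r : K[X]} (h : IsProperFraction f q)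
    (hqr : q ∣ r) (hr : r ≠ 0) : IsProperFraction f r := by
  obtain ⟨p, hd, he⟩ := h
  obtain ⟨s, rfl⟩ := hqr
  refine ⟨p * s, ?_, by rw [map_mul, ← mul_assoc, he, map_mul]⟩
  rw [degree_mul, degree_mul]
  exact WithBot.add_lt_add_right (degree_ne_bot.mpr (right_ne_zero_of_mul hr)) hd

theorem IsProperFraction.eq_zero_of_algebraMap {r q : K[X]}
    (h : IsProperFraction (algebraMap K[X] (RatFunc K) r) q) : r = 0 := by
  obtain ⟨p, hd, he⟩ := h
  rw [← map_mul] at he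
  have hrq : r * q = p := IsFractionRing.injective K[X] (RatFunc K) he
  by_contra hr
  have hp : p ≠ 0 := hrq ▸ mul_ne_zero hr (ne_zero_of_degree_gt hd)
  exact (degree_le_of_dvd (hrq ▸ dvd_mul_left q r) hp).not_gt hd

theorem isSquarefreeProperFraction_zero : IsSquarefreeProperFraction (0 : RatFunc K) :=
  ⟨1, squarefree_one, 0, by simp, by simp⟩

open UniqueFactorizationMonoid in
theorem IsSquarefreeProperFraction.add {f₁ f₂ : RatFunc K} (h₁ : IsSquarefreeProperFraction f₁)
    (h₂ : IsSquarefreeProperFraction f₂) : IsSquarefreeProperFraction (f₁ + f₂) := by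
  classical
  obtain ⟨q₁, hsf₁, hf₁⟩ := h₁
  obtain ⟨q₂, hsf₂, hf₂⟩ := h₂
  have hq : q₁ * q₂ ≠ 0 := mul_ne_zero hsf₁.ne_zero hsf₂.ne_zero
  refine ⟨radical (q₁ * q₂), squarefree_radical,
    (hf₁.of_dvd ?_ radical_ne_zero).add (hf₂.of_dvd ?_ radical_ne_zero)⟩
  · exact (dvd_radical_iff hsf₁.isRadical hq).mpr (dvd_mul_right _ _)
  · exact (dvd_radical_iff hsf₂.isRadical hq).mpr (dvd_mul_left _ _)

theorem IsSquarefreeProperFraction.algebraMap_mul {f : RatFunc K}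
    (h : IsSquarefreeProperFraction f) (c : K) :
    IsSquarefreeProperFraction (algebraMap K (RatFunc K) c * f) := by
  obtain ⟨q, hsf, p, hd, he⟩ := h
  refine ⟨q, hsf, Polynomial.C c * p, (degree_mul_le _ _).trans_lt ?_, ?_⟩
  · grw [degree_C_le, zero_add]
    exact hd
  · rw [mul_assoc, he, map_mul, algebraMap_C, algebraMap_eq_C]

theorem isSquarefreeProperFraction_div {p q : K[X]} (hsf : Squarefree q)
    (hdeg : p.degree < q.degree) :
    IsSquarefreeProperFraction (algebraMap K[X] (RatFunc K) p / algebraMap K[X] (RatFunc K) q) :=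
  ⟨q, hsf, p, hdeg, div_mul_cancel₀ _ (algebraMap_ne_zero hsf.ne_zero)⟩

end RatFunc

section Derivative

variable {K : Type*} [Field K]

theorem ratDeriv_zero : ratDeriv (0 : RatFunc K) = 0 := by
  simp [ratDeriv]

theorem ratDeriv_eq_wronskian_div (f : RatFunc K) :
    ratDeriv f = algebraMap K[X] (RatFunc K) (wronskian f.denom f.num) /
      algebraMap K[X] (RatFunc K) (f.denom ^ 2) := by
  rw [ratDeriv, wronskian, map_sub, map_mul, map_mul]
  ring

theorem isUnit_denom_of_ratDeriv_mul_squarefree [CharZero K] {f : RatFunc K} {P Q : K[X]}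
    (hQ : Squarefree Q)
    (he : ratDeriv f * algebraMap K[X] (RatFunc K) Q = algebraMap K[X] (RatFunc K) P) :
    IsUnit f.denom := by
  by_contra hu
  obtain ⟨π, hπ, hπq⟩ := WfDvdMonoid.exists_irreducible_factor hu f.denom_ne_zero
  obtain ⟨n, u, hπu, hq⟩ := WfDvdMonoid.max_power_factor f.denom_ne_zero hπ
  obtain ⟨m, rfl⟩ : ∃ m, n = m + 1 :=
    Nat.exists_eq_add_one_of_ne_zero fun hn => hπu (by rwa [hq, hn, pow_zero, one_mul] at hπq)
  have hπp : ¬π ∣ f.num := fun h => hπ.not_isUnit (f.isCoprime_num_denom.isUnit_of_dvd' h hπq)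
  obtain ⟨w, hw, hπw⟩ := exists_wronskian_pow_mul_eq_pow_mul_not_dvd hπ hπu hπp m
  have hkey : wronskian f.denom f.num * Q = P * f.denom ^ 2 := by
    apply IsFractionRing.injective K[X] (RatFunc K)
    rw [ratDeriv_eq_wronskian_div, div_mul_eq_mul_div,
      div_eq_iff (RatFunc.algebraMap_ne_zero (pow_ne_zero 2 f.denom_ne_zero))] at he
    simpa only [map_mul] using he
  rw [hq, hw] at hkey
  -- `π ∤ w`, so the factor `π ^ (2m+2)` of `denom ^ 2` can only be absorbed by `π ^ m * Q`
  have hdvd : π ^ (m + 2) ∣ w * Q := by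
    refine (mul_dvd_mul_iff_left (pow_ne_zero m hπ.ne_zero)).mp ⟨P * u ^ 2, ?_⟩
    rw [← mul_assoc, hkey]
    ring
  have hQ2 : π ^ 2 ∣ Q :=
    (pow_dvd_pow π (by omega)).trans (hπ.prime.pow_dvd_of_dvd_mul_left _ hπw hdvd)
  exact hπ.not_isUnit (hQ π (sq π ▸ hQ2))

theorem ratDeriv_eq_zero_of_isSquarefreeProperFraction [CharZero K] {f : RatFunc K}
    (h : (ratDeriv f).IsSquarefreeProperFraction) : ratDeriv f = 0 := by
  obtain ⟨Q, hQ, hf⟩ := h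
  obtain ⟨P, -, he⟩ := id hf
  have hden : f.denom = 1 :=
    f.monic_denom.eq_one_of_isUnit (isUnit_denom_of_ratDeriv_mul_squarefree hQ he)
  have hpoly : ratDeriv f = algebraMap K[X] (RatFunc K) (derivative f.num) := by
    simp [ratDeriv, hden]
  rw [hpoly] at hf ⊢
  rw [hf.eq_zero_of_algebraMap, map_zero]

end Derivative

theorem telescoper_iff_separable_rational_general
    {F : Type*} [Field F] [CharZero F]
    (a b : Polynomial (RatFunc F))
    (hdeg : a.degree < b.degree) (hsf : Squarefree b)
    (ρ : ℕ) (ℓ : ℕ → RatFunc F)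
    (Lf : RatFunc (RatFunc F))
    (hLf : Lf = ∑ i ∈ Finset.range (ρ + 1),
      algebraMap (RatFunc F) (RatFunc (RatFunc F)) (ℓ i) *
        (algebraMap (Polynomial (RatFunc F)) _ (a.map (shiftRF ^ i)) /
          algebraMap (Polynomial (RatFunc F)) _ (b.map (shiftRF ^ i)))) :
    (∃ h : RatFunc (RatFunc F), Lf = ratDeriv h) ↔ Lf = 0 := by
  refine ⟨fun ⟨h, hLh⟩ => ?_, fun hL => ⟨0, hL.trans ratDeriv_zero.symm⟩⟩
  have hLf_proper : Lf.IsSquarefreeProperFraction := by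
    rw [hLf]
    refine Finset.sum_induction _ _ (fun _ _ => .add) RatFunc.isSquarefreeProperFraction_zero
      fun i _ => ?_
    refine (RatFunc.isSquarefreeProperFraction_div (hsf.map_of_perfectField _) ?_).algebraMap_mul
      (ℓ i)
    rwa [degree_map, degree_map]
  rw [hLh] at hLf_proper ⊢
  exact ratDeriv_eq_zero_of_isSquarefreeProperFraction hLf_proper

/-- Let `f ∈ F(t, x)` with Hermite reduction `f = D_x(g) + a/b` (`gcd(a, b) = 1`,
`deg_x a < deg_x b`, `b` squarefree in `x` over `F(t)`). For any nonzero
`L = Σ_{i=0}^ρ ℓ_i S_t^i` with `ℓ_i ∈ F(t)`, the following are equivalent: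
`L(a/b)` is a derivative `D_x(h)` of some `h ∈ F(t, x)`, and `L(a/b) = 0`.
Here `F(t, x)` is realized as `Kt(x)` with `Kt = F(t)`, and
`σ_t^i(a/b) = (σ_t^i a)/(σ_t^i b)` acts on coefficients via the shift on `F(t)`. -/
theorem telescoper_iff_separable_rational
    {F : Type*} [Field F] [CharZero F]
    (a b : Polynomial (RatFunc F)) (hb : b ≠ 0) (hab : IsCoprime a b)
    (hdeg : a.degree < b.degree) (hsf : Squarefree b)
    (f g : RatFunc (RatFunc F))
    (hf : f = ratDeriv g + algebraMap (Polynomial (RatFunc F)) _ a /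
      algebraMap (Polynomial (RatFunc F)) _ b)
    (ρ : ℕ) (ℓ : ℕ → RatFunc F) (hne : ∃ i ≤ ρ, ℓ i ≠ 0)
    (Lf : RatFunc (RatFunc F))
    (hLf : Lf = ∑ i ∈ Finset.range (ρ + 1),
      algebraMap (RatFunc F) (RatFunc (RatFunc F)) (ℓ i) *
        (algebraMap (Polynomial (RatFunc F)) _ (a.map (shiftRF ^ i)) /
          algebraMap (Polynomial (RatFunc F)) _ (b.map (shiftRF ^ i)))) :
    (∃ h : RatFunc (RatFunc F), Lf = ratDeriv h) ↔ Lf = 0 :=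
  telescoper_iff_separable_rational_general a b hdeg hsf ρ ℓ Lf hLf
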